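/- For all integers n ≥ 0, the number of 13-colored overpartitions satisfies p̄_{-13}(8n+7) ≡ 0 (mod 256). -/

import Mathlib

/-- The number of `t`-colored overpartitions of `n`, i.e. the `n`-th coefficient of the
formal power series `∏_{k≥1} (1-q^{2k})^t / (1-q^k)^{2t}` over `ℤ`.  Since every factor
with index `k > n` is `≡ 1 (mod q^{n+1})`, the `n`-th coefficient of the infinite product
equals the `n`-th coefficient of the product over `1 ≤ k ≤ n`, which is used here. -/
noncomputable def pbar (t n : ℕ) : ℤ :=
  PowerSeries.coeff (R := ℤ) n
    ((∏ k ∈ Finset.Icc 1 n, (1 - PowerSeries.X ^ (2 * k)) ^ t) *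
      PowerSeries.invOfUnit (∏ k ∈ Finset.Icc 1 n, (1 - PowerSeries.X ^ k) ^ (2 * t)) 1)

open PowerSeries Finset



noncomputable def gb : ℕ → ℤ → PowerSeries ℤ
  | 0, k => if k = 0 then 1 else 0
  | (n+1), k => gb n k + X ^ (2*(n+1-k)).toNat * gb n (k-1)

lemma gb_succ (n : ℕ) (k : ℤ) :
    gb (n+1) k = gb n k + X ^ (2*((n:ℤ)+1-k)).toNat * gb n (k-1) := rfl

lemma gb_neg (n : ℕ) (k : ℤ) (h : k < 0) : gb n k = 0 := by
  induction n generalizing k with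
  | zero => simp [gb, show k ≠ 0 by omega]
  | succ n ih => simp [gb, ih k h, ih (k-1) (by omega)]

lemma gb_gt (n : ℕ) (k : ℤ) (h : (n:ℤ) < k) : gb n k = 0 := by
  induction n generalizing k with
  | zero => simp [gb, show k ≠ 0 by omega]
  | succ n ih => simp [gb, ih k (by omega), ih (k-1) (by omega)]

lemma gb_zero (n : ℕ) : gb n 0 = 1 := by
  induction n with
  | zero => simp [gb]
  | succ n ih => simp [gb, ih, gb_neg n (-1) (by omega)]

lemma gb_pascal2 (n : ℕ) (k : ℤ) :
    gb (n+1) k = X ^ (2*k).toNat * gb n k + gb n (k-1) := by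
  induction n generalizing k with
  | zero =>
    rcases lt_trichotomy k 0 with h | h | h
    · simp [gb, gb_neg 0 k h, gb_neg 0 (k-1) (by omega), show k ≠ 0 by omega,
        show k - 1 ≠ 0 by omega]
    · subst h; simp [gb, gb_zero, gb_neg 0 (-1) (by omega)]
    · rcases eq_or_lt_of_le (by omega : (1:ℤ) ≤ k) with h1 | h1
      · rw [← h1]; norm_num [gb, gb_zero]
      · simp [gb, gb_gt 0 k (by omega), gb_gt 0 (k-1) (by omega),
          show k ≠ 0 by omega, show k - 1 ≠ 0 by omega]
  | succ n ih =>
    rcases lt_trichotomy k 0 with h | h | h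
    · simp [gb_neg _ _ h, gb_neg _ (k-1) (by omega)]
    · subst h; simp [gb_zero, gb_neg _ (-1) (by omega)]
    · conv_lhs => rw [gb_succ (n+1) k, ih k, ih (k-1)]
      conv_rhs => rw [gb_succ n k, gb_succ n (k-1)]
      push_cast
      rcases le_or_gt k (n+1) with h2 | h2
      · have e1 : (2*((n:ℤ)+1+1-k)).toNat + (2*(k-1)).toNat = 2*n+2 := by omega
        have e2 : (2*k).toNat + (2*((n:ℤ)+1-k)).toNat = 2*n+2 := by omega
        have e3 : (2*((n:ℤ)+1-(k-1))).toNat = (2*((n:ℤ)+1+1-k)).toNat := by omega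
        rw [mul_add, mul_add, ← mul_assoc, ← mul_assoc, ← pow_add, ← pow_add, e1, e2, e3]
        ring
      · rcases eq_or_lt_of_le (by omega : (n:ℤ)+2 ≤ k) with h3 | h3
        · rw [gb_gt n k (by omega), gb_gt n (k-1) (by omega)]
          have e3 : (2*((n:ℤ)+1-(k-1))).toNat = (2*((n:ℤ)+1+1-k)).toNat := by omega
          rw [e3]; ring
        · rw [gb_gt n k (by omega), gb_gt n (k-1) (by omega), gb_gt n (k-1-1) (by omega)]
          simp


noncomputable def tp (a k : ℕ) : PowerSeries ℤ := ∏ j ∈ range k, (1 - X^(2*(a+j)+2))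


lemma tp_succ (a k : ℕ) : tp a (k+1) = tp a k * (1 - X^(2*(a+k)+2)) :=
  Finset.prod_range_succ _ _

lemma tp_succ' (a k : ℕ) : tp a (k+1) = (1 - X^(2*a+2)) * tp (a+1) k := by
  have h2 : tp (a+1) k = ∏ j ∈ range k, (1 - X^(2*(a+(j+1))+2)) := by
    apply Finset.prod_congr rfl
    intro j _
    rw [show 2*((a+1)+j)+2 = 2*(a+(j+1))+2 from by ring]
  rw [tp, Finset.prod_range_succ', mul_comm, h2, show 2*(a+0)+2 = 2*a+2 from by ring]

lemma tp_add (a k l : ℕ) : tp a (k+l) = tp a k * tp (a+k) l := by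
  rw [tp, Finset.prod_range_add]
  congr 1
  apply Finset.prod_congr rfl
  intro j _
  congr 2
  ring

lemma gb_closed (n : ℕ) : ∀ k : ℕ, k ≤ n → tp 0 k * gb n (k:ℤ) = tp (n-k) k := by
  induction n with
  | zero =>
    intro k hk
    interval_cases k
    simp [tp, gb_zero]
  | succ n ih =>
    intro k hk
    rcases Nat.eq_zero_or_pos k with rfl | hk0
    · simp [tp, gb_zero]
    · obtain ⟨k', rfl⟩ : ∃ k', k = k' + 1 := ⟨k-1, by omega⟩
      rw [gb_succ]
      have ecast : ((k':ℤ)+1) - 1 = (k' : ℤ) := by ring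
      have etn : (2*((n:ℤ)+1-(k'+1))).toNat = 2*(n-k') := by omega
      push_cast
      rw [ecast, etn]
      rcases le_or_gt (k'+1) n with h2 | h2
      · have ih1 := ih (k'+1) h2
        push_cast at ih1
        rw [mul_add, ih1]
        rw [tp_succ 0 k']
        rw [show tp 0 k' * (1 - X^(2*(0+k')+2)) * (X ^ (2*(n-k')) * gb n (k':ℤ)) =
              X ^ (2*(n-k')) * (1 - X^(2*(0+k')+2)) * (tp 0 k' * gb n (k':ℤ)) from by ring]
        rw [ih k' (by omega)]
        have e1 : tp (n-(k'+1)) (k'+1) = (1 - X^(2*(n-k'))) * tp (n-k') k' := by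
          rw [tp_succ', show n-(k'+1)+1 = n-k' from by omega,
            show 2*(n-(k'+1))+2 = 2*(n-k') from by omega]
        have e2 : tp (n-k') (k'+1) = tp (n-k') k' * (1 - X^(2*n+2)) := by
          rw [tp_succ, show 2*((n-k')+k')+2 = 2*n+2 from by omega]
        rw [e1, e2]
        rw [show (1 - X^(2*(n-k'))) * tp (n-k') k' +
              X^(2*(n-k')) * (1 - X^(2*(0+k')+2)) * tp (n-k') k' =
              tp (n-k') k' * (1 - X^(2*(n-k')) * X^(2*(0+k')+2)) from by ring,
            ← pow_add, show (2*(n-k')) + (2*(0+k')+2) = 2*n+2 from by omega]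
      · have hk' : n = k' := by omega
        subst hk'
        rw [gb_gt n ((n:ℤ)+1) (by omega), show 2*(n-n) = 0 from by omega, pow_zero,
          zero_add, one_mul, Nat.sub_self, tp_succ 0 n]
        rw [show tp 0 n * (1 - X^(2*(0+n)+2)) * gb n (n:ℤ) =
              (tp 0 n * gb n (n:ℤ)) * (1 - X^(2*(0+n)+2)) from by ring]
        have ih2 := ih n le_rfl
        rw [Nat.sub_self] at ih2
        rw [ih2, ← tp_succ]



noncomputable def eps (j : ℤ) : PowerSeries ℤ := ((j.negOnePow : ℤ) : PowerSeries ℤ)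

lemma eps_succ (j : ℤ) : eps (j+1) = -eps j := by
  simp [eps, Int.negOnePow_succ]

lemma eps_two (j : ℤ) : eps (j+2) = eps j := by
  rw [show j+2 = (j+1)+1 from by ring, eps_succ, eps_succ, neg_neg]

noncomputable def Sg (n : ℕ) : PowerSeries ℤ :=
  ∑ i ∈ Finset.Icc (0:ℤ) (2*(n:ℤ)), eps ((n:ℤ)+i) * X^(((i-(n:ℤ))^2).toNat) * gb (2*n) i

noncomputable def Ag (n : ℕ) : PowerSeries ℤ :=
  ∑ i ∈ Finset.Icc (0:ℤ) (2*(n:ℤ)+1),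
    eps ((n:ℤ)+1+i) * X^(((i-(n:ℤ)-1)^2).toNat) * gb (2*n+1) i

lemma icc_insert_bot (b : ℤ) (hb : 0 ≤ b) :
    Finset.Icc (0:ℤ) b = insert 0 (Finset.Icc 1 b) := by
  ext x; simp; omega

lemma icc_insert_top (b : ℤ) (hb : 0 ≤ b) :
    Finset.Icc (0:ℤ) b = insert b (Finset.Icc 0 (b-1)) := by
  ext x; simp; omega

lemma sum_shift1 (b : ℤ) (hb : 0 ≤ b) (f : ℤ → PowerSeries ℤ) (h0 : f 0 = 0) :
    ∑ i ∈ Finset.Icc (0:ℤ) b, f i = ∑ i ∈ Finset.Icc (0:ℤ) (b-1), f (i+1) := by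
  rw [icc_insert_bot b hb, Finset.sum_insert (by simp), h0, zero_add]
  have : Finset.Icc (1:ℤ) b = (Finset.Icc (0:ℤ) (b-1)).map (addRightEmbedding 1) := by
    rw [Finset.map_add_right_Icc]; norm_num
  rw [this, Finset.sum_map]
  rfl

lemma sum_top_zero (b : ℤ) (hb : 0 ≤ b) (f : ℤ → PowerSeries ℤ) (h0 : f b = 0) :
    ∑ i ∈ Finset.Icc (0:ℤ) b, f i = ∑ i ∈ Finset.Icc (0:ℤ) (b-1), f i := by
  rw [icc_insert_top b hb, Finset.sum_insert (by simp), h0, zero_add]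

lemma L2 (n : ℕ) : Ag n = (1 - X^(2*n+1)) * Sg n := by
  have expand : Ag n =
      ∑ i ∈ Finset.Icc (0:ℤ) (2*(n:ℤ)+1),
        (eps ((n:ℤ)+1+i) * (X^(((i-(n:ℤ)-1)^2).toNat + (2*i).toNat)) * gb (2*n) i
          + eps ((n:ℤ)+1+i) * X^(((i-(n:ℤ)-1)^2).toNat) * gb (2*n) (i-1)) := by
    apply Finset.sum_congr rfl
    intro i hi
    rw [gb_pascal2 (2*n) i, pow_add]
    ring
  rw [expand, Finset.sum_add_distrib]
  have hC : (∑ i ∈ Finset.Icc (0:ℤ) (2*(n:ℤ)+1),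
      eps ((n:ℤ)+1+i) * (X^(((i-(n:ℤ)-1)^2).toNat + (2*i).toNat)) * gb (2*n) i)
      = -X^(2*n+1) * Sg n := by
    have step : ∀ i ∈ Finset.Icc (0:ℤ) (2*(n:ℤ)+1),
        eps ((n:ℤ)+1+i) * (X^(((i-(n:ℤ)-1)^2).toNat + (2*i).toNat)) * gb (2*n) i
        = -X^(2*n+1) * (eps ((n:ℤ)+i) * X^(((i-(n:ℤ))^2).toNat) * gb (2*n) i) := by
      intro i hi
      simp only [Finset.mem_Icc] at hi
      have ha : (0:ℤ) ≤ (i-(n:ℤ)-1)^2 := sq_nonneg _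
      have hb' : (0:ℤ) ≤ (i-(n:ℤ))^2 := sq_nonneg _
      have hz : (i-(n:ℤ)-1)^2 + 2*i = (i-(n:ℤ))^2 + (2*(n:ℤ)+1) := by ring
      have he : ((i-(n:ℤ)-1)^2).toNat + (2*i).toNat
          = ((i-(n:ℤ))^2).toNat + (2*n+1) := by omega
      rw [he, pow_add, show (n:ℤ)+1+i = ((n:ℤ)+i)+1 from by ring, eps_succ]
      ring
    rw [Finset.sum_congr rfl step, ← Finset.mul_sum]
    congr 1
    have : (2*(n:ℤ)+1) - 1 = 2*(n:ℤ) := by ring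
    rw [sum_top_zero _ (by positivity) _ (by
      rw [gb_gt (2*n) (2*(n:ℤ)+1) (by push_cast; omega)]; ring), this]
    rfl
  have hD : (∑ i ∈ Finset.Icc (0:ℤ) (2*(n:ℤ)+1),
      eps ((n:ℤ)+1+i) * X^(((i-(n:ℤ)-1)^2).toNat) * gb (2*n) (i-1)) = Sg n := by
    rw [sum_shift1 _ (by positivity) _ (by
      rw [gb_neg (2*n) (0-1) (by omega)]; ring)]
    have : (2*(n:ℤ)+1) - 1 = 2*(n:ℤ) := by ring
    rw [this]
    apply Finset.sum_congr rfl
    intro i hi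
    have e1 : (n:ℤ)+1+(i+1) = ((n:ℤ)+i)+2 := by ring
    have e2 : i+1-(n:ℤ)-1 = i-(n:ℤ) := by ring
    have e3 : i+1-1 = i := by ring
    rw [e1, e2, e3, eps_two]
  rw [hC, hD]
  ring

lemma L1 (n : ℕ) : Sg (n+1) = (1 - X^(2*n+1)) * Ag n := by
  have expand : Sg (n+1) =
      ∑ i ∈ Finset.Icc (0:ℤ) (2*(n:ℤ)+2),
        (eps ((n:ℤ)+1+i) * X^(((i-(n:ℤ)-1)^2).toNat) * gb (2*n+1) i
          + eps ((n:ℤ)+1+i) * (X^(((i-(n:ℤ)-1)^2).toNat + (2*((2*n:ℤ)+2-i)).toNat))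
              * gb (2*n+1) (i-1)) := by
    rw [Sg]
    push_cast
    rw [show (2*((n:ℤ)+1)) = 2*(n:ℤ)+2 from by ring]
    apply Finset.sum_congr rfl
    intro i hi
    rw [show 2*(n+1) = (2*n+1)+1 from by ring, gb_succ (2*n+1) i, pow_add]
    push_cast
    rw [show (i-((n:ℤ)+1)) = i-(n:ℤ)-1 from by ring,
        show (2*((2*(n:ℤ)+1)+1-i)).toNat = (2*((2*n:ℤ)+2-i)).toNat from by omega]
    ring
  rw [expand, Finset.sum_add_distrib]
  have hA : (∑ i ∈ Finset.Icc (0:ℤ) (2*(n:ℤ)+2),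
      eps ((n:ℤ)+1+i) * X^(((i-(n:ℤ)-1)^2).toNat) * gb (2*n+1) i) = Ag n := by
    rw [sum_top_zero _ (by positivity) _ (by
      rw [gb_gt (2*n+1) (2*(n:ℤ)+2) (by push_cast; omega)]; ring)]
    rw [show (2*(n:ℤ)+2) - 1 = 2*(n:ℤ)+1 from by ring]
    rfl
  have hB : (∑ i ∈ Finset.Icc (0:ℤ) (2*(n:ℤ)+2),
      eps ((n:ℤ)+1+i) * (X^(((i-(n:ℤ)-1)^2).toNat + (2*((2*n:ℤ)+2-i)).toNat))
        * gb (2*n+1) (i-1)) = -X^(2*n+1) * Ag n := by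
    rw [sum_shift1 _ (by positivity) _ (by
      rw [gb_neg (2*n+1) (0-1) (by omega)]; ring)]
    rw [show (2*(n:ℤ)+2) - 1 = 2*(n:ℤ)+1 from by ring]
    rw [Ag, Finset.mul_sum]
    apply Finset.sum_congr rfl
    intro i hi
    simp only [Finset.mem_Icc] at hi
    have ha : (0:ℤ) ≤ (i-(n:ℤ))^2 := sq_nonneg _
    have hb' : (0:ℤ) ≤ (i-(n:ℤ)-1)^2 := sq_nonneg _
    have hz : (i-(n:ℤ))^2 + 2*((2*n:ℤ)+1-i) = (i-(n:ℤ)-1)^2 + (2*(n:ℤ)+1) := by ring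
    have he : ((i+1-(n:ℤ)-1)^2).toNat + (2*((2*n:ℤ)+2-(i+1))).toNat
        = ((i-(n:ℤ)-1)^2).toNat + (2*n+1) := by
      rw [show i+1-(n:ℤ)-1 = i-(n:ℤ) from by ring,
          show (2*n:ℤ)+2-(i+1) = (2*n:ℤ)+1-i from by ring]
      omega
    rw [he, pow_add, show (n:ℤ)+1+(i+1) = ((n:ℤ)+1+i)+1 from by ring, eps_succ,
        show i+1-1 = i from by ring]
    ring
  rw [hA, hB]
  ring

theorem gauss_fin (n : ℕ) : Sg n = (∏ m ∈ range n, (1 - X^(2*m+1)))^2 := by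
  induction n with
  | zero =>
    rw [Sg]
    norm_num
    simp [eps, gb_zero]
  | succ n ih =>
    rw [L1, L2, ih, Finset.prod_range_succ]
    ring



-- congruence helpers
lemma md_mul {D : ℕ} {a b c d : PowerSeries ℤ} (h1 : (X:PowerSeries ℤ)^D ∣ a - b)
    (h2 : (X:PowerSeries ℤ)^D ∣ c - d) : (X:PowerSeries ℤ)^D ∣ a*c - b*d := by
  have : a*c - b*d = (a-b)*c + b*(c-d) := by ring
  rw [this]
  exact dvd_add (h1.mul_right c) (h2.mul_left b)

lemma md_pow {D : ℕ} {a b : PowerSeries ℤ} (h : (X:PowerSeries ℤ)^D ∣ a - b) (k : ℕ) :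
    (X:PowerSeries ℤ)^D ∣ a^k - b^k := by
  induction k with
  | zero => simp
  | succ k ih =>
    rw [pow_succ, pow_succ]
    exact md_mul ih h

lemma prod_tail_one {D : ℕ} (s : Finset ℕ) (e : ℕ → ℕ) (h : ∀ k ∈ s, D ≤ e k) :
    (X:PowerSeries ℤ)^D ∣ (∏ k ∈ s, (1 - X^(e k))) - 1 := by
  induction s using Finset.cons_induction with
  | empty => simp
  | cons a s ha ih =>
    rw [Finset.prod_cons]
    have h1 : (X:PowerSeries ℤ)^D ∣ (1 - X^(e a)) - 1 := by
      rw [sub_sub_cancel_left]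
      exact (pow_dvd_pow X (h a (Finset.mem_cons_self a s))).neg_right
    have h2 := ih (fun k hk => h k (Finset.mem_cons_of_mem hk))
    have := md_mul h1 h2
    simpa using this

lemma tp_one {D : ℕ} (a k : ℕ) (h : D ≤ 2*a+2) :
    (X:PowerSeries ℤ)^D ∣ tp a k - 1 := by
  apply prod_tail_one
  intro j _
  omega

-- theta series
def thetaCoeff (m : ℕ) : ℤ :=
  if (Nat.sqrt m)^2 = m then (if m = 0 then 1 else 2 * (-1)^(Nat.sqrt m)) else 0

noncomputable def Th : PowerSeries ℤ := PowerSeries.mk thetaCoeff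

lemma key1 (M : ℕ) :
    (X:PowerSeries ℤ)^(M+1) ∣ tp 0 (2*(M+1)) * Sg (M+1)
      - ∑ i ∈ Finset.Icc (0:ℤ) (2*((M+1:ℕ):ℤ)),
          eps (((M+1:ℕ):ℤ)+i) * X^(((i-((M+1:ℕ):ℤ))^2).toNat) := by
  set n : ℕ := M+1 with hn
  rw [Sg, Finset.mul_sum, ← Finset.sum_sub_distrib]
  apply Finset.dvd_sum
  intro i hi
  simp only [Finset.mem_Icc] at hi
  have hrw : tp 0 (2*n) * (eps ((n:ℤ)+i) * X^(((i-(n:ℤ))^2).toNat) * gb (2*n) i)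
      - eps ((n:ℤ)+i) * X^(((i-(n:ℤ))^2).toNat)
      = eps ((n:ℤ)+i) * X^(((i-(n:ℤ))^2).toNat) * (tp 0 (2*n) * gb (2*n) i - 1) := by
    ring
  rw [hrw]
  rcases le_or_gt (M+1) (((i-(n:ℤ))^2).toNat) with hbig | hsmall
  · exact (dvd_mul_of_dvd_right (pow_dvd_pow X hbig) _).mul_right _
  · -- central term: tp 0 (2n) * gb (2n) i ≡ 1
    apply Dvd.dvd.mul_left
    set k : ℕ := i.toNat with hk
    have hik : (i:ℤ) = (k:ℤ) := by omega
    have hk2n : k ≤ 2*n := by omega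
    have hgb : gb (2*n) i = gb (2*n) (k:ℤ) := by rw [hik]
    -- bound: |i - n| small
    have hd2 : (i-(n:ℤ))^2 ≤ (M:ℤ) := by
      have := hsmall
      have h0 : (0:ℤ) ≤ (i-(n:ℤ))^2 := sq_nonneg _
      omega
    have hdist : 2*(n:ℤ) - 2*k ≤ (M:ℤ) + 1 ∧ 2*(k:ℤ) - 2*n ≤ (M:ℤ) + 1 := by
      constructor <;>
      · nlinarith [sq_nonneg (i - (n:ℤ) - 1), sq_nonneg (i - (n:ℤ) + 1), hd2, hik]
    have hsplit : tp 0 (2*n) = tp 0 k * tp k (2*n - k) := by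
      have h := tp_add 0 k (2*n-k)
      rw [zero_add] at h
      rw [show k + (2*n-k) = 2*n from by omega] at h
      exact h
    rw [hgb, hsplit, show tp 0 k * tp k (2*n-k) * gb (2*n) (k:ℤ)
        = tp k (2*n-k) * (tp 0 k * gb (2*n) (k:ℤ)) from by ring,
      gb_closed (2*n) k hk2n]
    have h1 : (X:PowerSeries ℤ)^(M+1) ∣ tp k (2*n-k) - 1 := tp_one _ _ (by omega)
    have h2 : (X:PowerSeries ℤ)^(M+1) ∣ tp (2*n-k) k - 1 := tp_one _ _ (by omega)
    simpa using md_mul h1 h2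

lemma sq_cases {a b : ℤ} (hb : 0 ≤ b) (h : a^2 = b^2) : a = b ∨ a = -b := by
  have h2 : (a - b) * (a + b) = 0 := by linear_combination h
  rcases mul_eq_zero.mp h2 with h3 | h3
  · left; omega
  · right; omega

lemma key2 (M : ℕ) :
    (X:PowerSeries ℤ)^(M+1) ∣
      (∑ i ∈ Finset.Icc (0:ℤ) (2*((M+1:ℕ):ℤ)),
        eps (((M+1:ℕ):ℤ)+i) * X^(((i-((M+1:ℕ):ℤ))^2).toNat)) - Th := by
  set n : ℕ := M+1 with hn
  rw [PowerSeries.X_pow_dvd_iff]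
  intro m hm
  rw [map_sub, map_sum]
  rw [sub_eq_zero]
  have hterm : ∀ i : ℤ, (coeff m) (eps ((n:ℤ)+i) * X^(((i-(n:ℤ))^2).toNat))
      = if m = (((i-(n:ℤ))^2).toNat) then ((((n:ℤ)+i).negOnePow : ℤ)) else 0 := by
    intro i
    have hc : eps ((n:ℤ)+i) = C ((((n:ℤ)+i).negOnePow : ℤ)) := by
      rw [eps, ← map_intCast (C (R := ℤ)), Int.cast_id]
    rw [hc, coeff_C_mul, coeff_X_pow, mul_ite, mul_one, mul_zero]
  have hTh : (coeff m) Th = thetaCoeff m := by simp [Th]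
  rw [hTh, Finset.sum_congr rfl (fun i _ => hterm i)]
  set s : ℕ := Nat.sqrt m with hs
  by_cases hsq : s^2 = m
  · rcases Nat.eq_zero_or_pos m with rfl | hm1
    · -- m = 0
      have hpt : ∀ i ∈ Finset.Icc (0:ℤ) (2*(n:ℤ)),
          (if 0 = (((i-(n:ℤ))^2).toNat) then ((((n:ℤ)+i).negOnePow : ℤ)) else 0)
          = if i = (n:ℤ) then 1 else 0 := by
        intro i _
        by_cases h : i = (n:ℤ)
        · subst h
          rw [if_pos (by simp), if_pos rfl,
            Int.negOnePow_even ((n:ℤ)+(n:ℤ)) ⟨(n:ℤ), rfl⟩]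
          rfl
        · have : ¬ (0 = (((i-(n:ℤ))^2).toNat)) := by
            intro hcon
            have h0 : (i-(n:ℤ))^2 ≤ 0 := by omega
            have h1 : (i-(n:ℤ))^2 = 0 := le_antisymm h0 (sq_nonneg _)
            have := pow_eq_zero_iff (n := 2) (by norm_num) |>.mp h1
            omega
          simp [this, h]
      rw [Finset.sum_congr rfl hpt, Finset.sum_ite_eq' (Finset.Icc (0:ℤ) (2*(n:ℤ))) ((n:ℤ)) (fun _ => (1:ℤ)),
        if_pos (by rw [Finset.mem_Icc]; omega)]
      simp [thetaCoeff]
    · -- m ≥ 1 square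
      have hs1 : 1 ≤ s := by
        rcases Nat.eq_zero_or_pos s with h | h
        · rw [h] at hsq; simp at hsq; omega
        · exact h
      have hsm : s ≤ m := by nlinarith
      have hsn : (s:ℤ) ≤ (n:ℤ) := by
        have : m ≤ M := by omega
        omega
      have hcast : ((s:ℤ))^2 = (m:ℤ) := by exact_mod_cast hsq
      have hpt : ∀ i ∈ Finset.Icc (0:ℤ) (2*(n:ℤ)),
          (if m = (((i-(n:ℤ))^2).toNat) then ((((n:ℤ)+i).negOnePow : ℤ)) else 0)
          = (if i = (n:ℤ)-(s:ℤ) then ((-1:ℤ))^s else 0)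
            + (if i = (n:ℤ)+(s:ℤ) then ((-1:ℤ))^s else 0) := by
        intro i _
        by_cases h1 : i = (n:ℤ)-(s:ℤ)
        · subst h1
          have he : (((n:ℤ)-(s:ℤ)-(n:ℤ))^2).toNat = m := by
            have hx : ((n:ℤ)-(s:ℤ)-(n:ℤ))^2 = ((m:ℕ):ℤ) := by rw [← hcast]; ring
            rw [hx]; simp
          have hsign : (((n:ℤ)+((n:ℤ)-(s:ℤ))).negOnePow : ℤ) = (-1:ℤ)^s := by
            rw [show (n:ℤ)+((n:ℤ)-(s:ℤ)) = 2*(n:ℤ) + (-(s:ℤ)) from by ring,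
              Int.negOnePow_add, Int.negOnePow_two_mul, one_mul, Int.negOnePow_neg]
            exact_mod_cast Int.coe_negOnePow_natCast s
          have hne : ¬((n:ℤ)-(s:ℤ) = (n:ℤ)+(s:ℤ)) := by omega
          rw [he, hsign, if_pos rfl, if_neg hne, if_pos rfl]
          ring
        · by_cases h2 : i = (n:ℤ)+(s:ℤ)
          · subst h2
            have he : (((n:ℤ)+(s:ℤ)-(n:ℤ))^2).toNat = m := by
              have hx : ((n:ℤ)+(s:ℤ)-(n:ℤ))^2 = ((m:ℕ):ℤ) := by rw [← hcast]; ring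
              rw [hx]; simp
            have hsign : (((n:ℤ)+((n:ℤ)+(s:ℤ))).negOnePow : ℤ) = (-1:ℤ)^s := by
              rw [show (n:ℤ)+((n:ℤ)+(s:ℤ)) = 2*(n:ℤ) + (s:ℤ) from by ring,
                Int.negOnePow_add, Int.negOnePow_two_mul, one_mul]
              exact_mod_cast Int.coe_negOnePow_natCast s
            have hne : ¬((n:ℤ)+(s:ℤ) = (n:ℤ)-(s:ℤ)) := by omega
            rw [he, hsign, if_pos rfl, if_neg hne, if_pos rfl]
            ring
          · have : ¬ (m = (((i-(n:ℤ))^2).toNat)) := by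
              intro hcon
              have hsq2 : (i-(n:ℤ))^2 = ((s:ℤ))^2 := by rw [hcast]; omega
              rcases sq_cases (by positivity) hsq2 with h3 | h3 <;> omega
            rw [if_neg this, if_neg h1, if_neg h2]
            ring
      rw [Finset.sum_congr rfl hpt, Finset.sum_add_distrib,
        Finset.sum_ite_eq' _ ((n:ℤ)-(s:ℤ)) (fun _ => ((-1:ℤ))^s),
        Finset.sum_ite_eq' _ ((n:ℤ)+(s:ℤ)) (fun _ => ((-1:ℤ))^s),
        if_pos (by rw [Finset.mem_Icc]; omega), if_pos (by rw [Finset.mem_Icc]; omega)]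
      rw [thetaCoeff, ← hs, if_pos hsq, if_neg (by omega)]
      ring
  · -- not a square
    have hpt : ∀ i ∈ Finset.Icc (0:ℤ) (2*(n:ℤ)),
        (if m = (((i-(n:ℤ))^2).toNat) then ((((n:ℤ)+i).negOnePow : ℤ)) else 0) = 0 := by
      intro i _
      rw [if_neg]
      intro hcon
      set a : ℕ := (i-(n:ℤ)).natAbs with ha
      have h1 : (i-(n:ℤ))^2 = ((a^2 : ℕ) : ℤ) := by
        rw [ha, ← Int.natAbs_sq]
        norm_cast
      have h2 : m = a^2 := by omega
      have h3 : Nat.sqrt m = a := by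
        rw [h2, Nat.sqrt_eq']
      rw [hs] at hsq
      rw [h3] at hsq
      omega
    rw [Finset.sum_congr rfl hpt, Finset.sum_const_zero, thetaCoeff, ← hs, if_neg hsq]

lemma prod_Icc1 (N : ℕ) (f : ℕ → PowerSeries ℤ) :
    ∏ k ∈ Finset.Icc 1 N, f k = ∏ k ∈ range N, f (k+1) := by
  induction N with
  | zero => simp
  | succ N ih => rw [Finset.prod_Icc_succ_top (by omega), ih, Finset.prod_range_succ]

lemma prod_split (n : ℕ) :
    ∏ k ∈ range (2*n), (1 - (X:PowerSeries ℤ)^(k+1))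
      = (∏ m ∈ range n, (1 - X^(2*m+1))) * tp 0 n := by
  induction n with
  | zero => simp [tp]
  | succ n ih =>
    rw [show 2*(n+1) = (2*n)+1+1 from by ring, Finset.prod_range_succ,
      Finset.prod_range_succ, ih, Finset.prod_range_succ,
      show tp 0 (n+1) = tp 0 n * (1 - X^(2*(0+n)+2)) from Finset.prod_range_succ _ _]
    rw [show 2*n+1+1 = 2*(0+n)+2 from by ring, show 2*n+1 = 2*n+1 from rfl]
    ring

theorem master (M : ℕ) :
    (X:PowerSeries ℤ)^(M+1) ∣
      Th * (∏ k ∈ Finset.Icc 1 M, (1 - X^(2*k))) - (∏ k ∈ Finset.Icc 1 M, (1 - X^k))^2 := by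
  set n : ℕ := M+1 with hn
  set PM : PowerSeries ℤ := ∏ k ∈ Finset.Icc 1 M, (1 - X^k) with hPM
  set QM : PowerSeries ℤ := ∏ k ∈ Finset.Icc 1 M, (1 - X^(2*k)) with hQM
  set Odd : PowerSeries ℤ := ∏ m ∈ range n, (1 - X^(2*m+1)) with hOdd
  -- Th ≡ tp 0 (2n) * Odd^2
  have hTh : (X:PowerSeries ℤ)^(M+1) ∣ tp 0 (2*n) * Odd^2 - Th := by
    have h1 := key1 M
    have h2 := key2 M
    rw [gauss_fin] at h1
    have := dvd_add h1 h2
    simpa using this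
  -- QM ≡ tp 0 n
  have hQ : (X:PowerSeries ℤ)^(M+1) ∣ QM - tp 0 n := by
    have e : tp 0 n = ∏ k ∈ Finset.Icc 1 n, (1 - (X:PowerSeries ℤ)^(2*k)) := by
      rw [prod_Icc1 n (fun k => 1 - X^(2*k)), tp]
      apply Finset.prod_congr rfl
      intro j _
      rw [show 2*(0+j)+2 = 2*(j+1) from by ring]
    rw [e, hn, Finset.prod_Icc_succ_top (by omega), ← hQM]
    rw [show QM - QM * (1 - X^(2*(M+1))) = QM * X^(2*(M+1)) from by ring]
    exact Dvd.dvd.mul_left (pow_dvd_pow X (by omega)) QM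
  -- PM ≡ Odd * tp 0 n
  have hP : (X:PowerSeries ℤ)^(M+1) ∣ Odd * tp 0 n - PM := by
    have e1 : PM = ∏ k ∈ range M, (1 - (X:PowerSeries ℤ)^(k+1)) := by
      rw [hPM, prod_Icc1]
    have e2 : ∏ k ∈ range (2*n), (1 - (X:PowerSeries ℤ)^(k+1))
        = PM * ∏ k ∈ range (n+1), (1 - (X:PowerSeries ℤ)^(M+k+1)) := by
      have hrw : 2*n = M + (n+1) := by omega
      rw [e1, hrw, Finset.prod_range_add]
    have e3 : (X:PowerSeries ℤ)^(M+1) ∣ (∏ k ∈ range (n+1), (1 - (X:PowerSeries ℤ)^(M+k+1))) - 1 :=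
      prod_tail_one _ _ (fun k _ => by omega)
    have h4 : Odd * tp 0 n = PM * ∏ k ∈ range (n+1), (1 - (X:PowerSeries ℤ)^(M+k+1)) := by
      rw [← e2, prod_split]
    rw [h4, show PM * (∏ k ∈ range (n+1), (1 - (X:PowerSeries ℤ)^(M+k+1))) - PM
        = PM * ((∏ k ∈ range (n+1), (1 - (X:PowerSeries ℤ)^(M+k+1))) - 1) from by ring]
    exact e3.mul_left PM
  -- tp n n ≡ 1
  have htn : (X:PowerSeries ℤ)^(M+1) ∣ tp n n - 1 := tp_one _ _ (by omega)
  have hsplit : tp 0 (2*n) = tp 0 n * tp n n := by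
    have h := tp_add 0 n n
    rw [zero_add] at h
    rw [show n + n = 2*n from by ring] at h
    exact h
  -- assemble
  have hA : (X:PowerSeries ℤ)^(M+1) ∣ (tp 0 n * tp n n * Odd^2) * (tp 0 n) - Th * QM := by
    have := md_mul hTh (by
      have := hQ
      rw [show QM - tp 0 n = -(tp 0 n - QM) from by ring] at this
      exact (dvd_neg.mp this) : (X:PowerSeries ℤ)^(M+1) ∣ tp 0 n - QM)
    rw [hsplit] at this
    exact this
  have hB : (X:PowerSeries ℤ)^(M+1) ∣ (Odd * tp 0 n)^2 * (tp n n) - PM^2 * 1 :=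
    md_mul (md_pow hP 2) htn
  have hfin : Th * QM - PM^2
      = -((tp 0 n * tp n n * Odd^2) * (tp 0 n) - Th * QM) + ((Odd * tp 0 n)^2 * (tp n n) - PM^2 * 1) := by
    ring
  rw [hfin]
  exact dvd_add (hA.neg_right) hB



noncomputable def useries : PowerSeries ℤ :=
  PowerSeries.mk fun m => if (Nat.sqrt m)^2 = m ∧ 16 ∣ m ∧ m ≠ 0 then (1:ℤ) else 0
noncomputable def vseries : PowerSeries ℤ :=
  PowerSeries.mk fun m => if (Nat.sqrt (m+4))^2 = (m+4) ∧ 8 ∣ m then (1:ℤ) else 0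
noncomputable def wseries : PowerSeries ℤ :=
  PowerSeries.mk fun m => if (Nat.sqrt (m+1))^2 = (m+1) ∧ 8 ∣ m then (1:ℤ) else 0
noncomputable def bser : PowerSeries ℤ := useries + X^4 * vseries - X * wseries

lemma sqrt_sq_self (s : ℕ) : Nat.sqrt (s^2) = s := Nat.sqrt_eq' s

lemma theta_eq : Th = 1 + 2 * bser := by
  ext m
  have h2 : (2:PowerSeries ℤ) = C 2 := by
    rw [map_ofNat]
  rw [Th, coeff_mk, map_add, h2, coeff_C_mul, bser,
    show (X:PowerSeries ℤ) * wseries = X^1 * wseries from by rw [pow_one],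
    map_sub, map_add,
    PowerSeries.coeff_X_pow_mul' vseries 4 m, PowerSeries.coeff_X_pow_mul' wseries 1 m,
    useries, coeff_mk]
  rcases Nat.eq_zero_or_pos m with rfl | hm1
  · simp [thetaCoeff]
  · have hone : (coeff m) (1:PowerSeries ℤ) = 0 := by
      rw [coeff_one, if_neg (by omega)]
    rw [hone, zero_add]
    set s : ℕ := Nat.sqrt m with hs
    by_cases hsq : s^2 = m
    · -- m is a positive square
      have hvw : (if 4 ≤ m then (coeff (m-4)) vseries else 0)
            = (if 4 ≤ m ∧ 8 ∣ (m-4) then (1:ℤ) else 0) := by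
        by_cases h4 : 4 ≤ m
        · rw [if_pos h4, vseries, coeff_mk, show m-4+4 = m from by omega, ← hs]
          by_cases h8 : 8 ∣ (m-4)
          · rw [if_pos ⟨hsq, h8⟩, if_pos ⟨h4, h8⟩]
          · rw [if_neg (fun h => h8 h.2), if_neg (fun h => h8 h.2)]
        · rw [if_neg h4, if_neg (fun h => h4 h.1)]
      have hww : (if 1 ≤ m then (coeff (m-1)) wseries else 0)
            = (if 8 ∣ (m-1) then (1:ℤ) else 0) := by
        rw [if_pos (show 1 ≤ m from hm1), wseries, coeff_mk, show m-1+1 = m from by omega, ← hs]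
        by_cases h8 : 8 ∣ (m-1)
        · rw [if_pos ⟨hsq, h8⟩, if_pos h8]
        · rw [if_neg (fun h => h8 h.2), if_neg h8]
      rw [hvw, hww, thetaCoeff, ← hs, if_pos hsq, if_neg (by omega)]
      have hs1 : 1 ≤ s := by
        rcases Nat.eq_zero_or_pos s with h | h
        · rw [h] at hsq; simp at hsq; omega
        · exact h
      -- case on s mod 4
      rcases Nat.even_or_odd s with hpar | hpar
      · obtain ⟨t, ht⟩ := hpar
        have hm : m = 4*(t*t) := by rw [← hsq, ht]; ring
        rcases Nat.even_or_odd t with hp2 | hp2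
        · -- s ≡ 0 mod 4
          obtain ⟨r, hr⟩ := hp2
          have hm16 : m = 16*(r*r) := by rw [hm, hr]; ring
          have h16 : 16 ∣ m := ⟨r*r, hm16⟩
          rw [if_pos (show (Nat.sqrt m)^2 = m ∧ 16 ∣ m ∧ m ≠ 0 from ⟨hsq, h16, by omega⟩),
            if_neg (show ¬(4 ≤ m ∧ 8 ∣ (m-4)) from by omega),
            if_neg (show ¬(8 ∣ (m-1)) from by omega),
            Even.neg_one_pow (show Even s from ⟨t, ht⟩)]
          ring
        · -- s ≡ 2 mod 4
          obtain ⟨r, hr⟩ := hp2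
          have hm' : m = 16*(r*r+r) + 4 := by rw [hm, hr]; ring
          rw [if_neg (show ¬((Nat.sqrt m)^2 = m ∧ 16 ∣ m ∧ m ≠ 0) from by
              rintro ⟨-, h16, -⟩; omega),
            if_pos (show 4 ≤ m ∧ 8 ∣ (m-4) from by omega),
            if_neg (show ¬(8 ∣ (m-1)) from by omega),
            Even.neg_one_pow (show Even s from ⟨t, ht⟩)]
          ring
      · -- s odd
        obtain ⟨t, ht⟩ := hpar
        have he : Even (t*t+t) := by
          rcases Nat.even_or_odd t with h | h
          · exact h.mul_left t |>.add h
          · exact (h.mul h).add_odd h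
        obtain ⟨e, hee⟩ := he
        have hm' : m = 8*e + 1 := by
          have : m = 4*(t*t+t) + 1 := by rw [← hsq, ht]; ring
          omega
        rw [if_neg (show ¬((Nat.sqrt m)^2 = m ∧ 16 ∣ m ∧ m ≠ 0) from by
            rintro ⟨-, h16, -⟩; omega),
          if_neg (show ¬(4 ≤ m ∧ 8 ∣ (m-4)) from by rintro ⟨h4, h8⟩; omega),
          if_pos (show 8 ∣ (m-1) from by omega), Odd.neg_one_pow (show Odd s from ⟨t, by omega⟩)]
        ring
    · -- not a square
      rw [thetaCoeff, ← hs, if_neg hsq,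
        if_neg (show ¬((Nat.sqrt m)^2 = m ∧ 16 ∣ m ∧ m ≠ 0) from fun h => hsq h.1)]
      have hv : (if 4 ≤ m then (coeff (m-4)) vseries else 0) = 0 := by
        by_cases h4 : 4 ≤ m
        · rw [if_pos h4, vseries, coeff_mk, show m-4+4 = m from by omega, ← hs,
            if_neg (fun h => hsq h.1)]
        · rw [if_neg h4]
      have hw : (if 1 ≤ m then (coeff (m-1)) wseries else 0) = 0 := by
        rw [if_pos (show 1 ≤ m from hm1), wseries, coeff_mk, show m-1+1 = m from by omega, ← hs,
          if_neg (fun h => hsq h.1)]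
      rw [hv, hw]
      ring

def sup8 (f : PowerSeries ℤ) : Prop := ∀ m : ℕ, ¬(8 ∣ m) → coeff m f = 0

lemma sup8_u : sup8 useries := by
  intro m hm
  rw [useries, coeff_mk, if_neg]
  rintro ⟨-, h16, -⟩
  exact hm (dvd_trans ⟨2, rfl⟩ h16)

lemma sup8_v : sup8 vseries := by
  intro m hm
  rw [vseries, coeff_mk, if_neg]
  rintro ⟨-, h8⟩
  exact hm h8

lemma sup8_w : sup8 wseries := by
  intro m hm
  rw [wseries, coeff_mk, if_neg]
  rintro ⟨-, h8⟩
  exact hm h8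

lemma sup8_one : sup8 1 := by
  intro m hm
  rw [coeff_one, if_neg (by omega)]

lemma sup8_mul {f g : PowerSeries ℤ} (hf : sup8 f) (hg : sup8 g) : sup8 (f * g) := by
  intro m hm
  rw [PowerSeries.coeff_mul]
  apply Finset.sum_eq_zero
  intro p hp
  rw [Finset.HasAntidiagonal.mem_antidiagonal] at hp
  by_cases h1 : 8 ∣ p.1
  · rw [hg p.2 (by omega), mul_zero]
  · rw [hf p.1 h1, zero_mul]

lemma sup8_pow {f : PowerSeries ℤ} (hf : sup8 f) (k : ℕ) : sup8 (f^k) := by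
  induction k with
  | zero => simpa using sup8_one
  | succ k ih => rw [pow_succ]; exact sup8_mul ih hf

lemma coeff_Xpow_mul_sup8 {g : PowerSeries ℤ} (hg : sup8 g) {M s : ℕ}
    (hMs : ¬ (s ≤ M ∧ 8 ∣ (M - s))) : coeff M (X^s * g) = 0 := by
  rw [PowerSeries.coeff_X_pow_mul' g s M]
  by_cases h : s ≤ M
  · rw [if_pos h, hg (M-s) (fun hdvd => hMs ⟨h, hdvd⟩)]
  · rw [if_neg h]

lemma beta_pow_coeff (M : ℕ) (hM : M % 8 = 7) (j : ℕ) (d : ℤ)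
    (hd : ∀ i b : ℕ, b ≤ i → i ≤ j → (4*(i-b) + (j-i)) % 8 = 7 →
      d ∣ ((Nat.choose j i * Nat.choose i b : ℕ) : ℤ)) :
    d ∣ coeff M (bser^j) := by
  have hbeta : bser = (useries + X^4 * vseries) + (-(X * wseries)) := by
    rw [bser]; ring
  rw [hbeta, add_pow, map_sum]
  apply Finset.dvd_sum
  intro i hi
  rw [Finset.mem_range] at hi
  rw [add_pow, Finset.sum_mul, Finset.sum_mul, map_sum]
  apply Finset.dvd_sum
  intro b hb
  rw [Finset.mem_range] at hb
  have hterm : useries^b * (X^4*vseries)^(i-b) * ((Nat.choose i b : ℕ) : PowerSeries ℤ)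
        * (-(X * wseries))^(j-i) * ((Nat.choose j i : ℕ) : PowerSeries ℤ)
      = C ((Nat.choose j i * Nat.choose i b : ℕ) : ℤ) * ((-1)^(j-i) *
        (X^(4*(i-b) + (j-i)) * (useries^b * vseries^(i-b) * wseries^(j-i)))) := by
    rw [neg_pow, mul_pow, mul_pow, ← pow_mul, pow_add]
    rw [show ((Nat.choose j i * Nat.choose i b : ℕ) : ℤ) =
        ((Nat.choose j i : ℕ) : ℤ) * ((Nat.choose i b : ℕ) : ℤ) from by push_cast; ring]
    rw [map_mul, show C ((Nat.choose j i : ℕ) : ℤ) = ((Nat.choose j i : ℕ) : PowerSeries ℤ)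
        from by rw [← map_natCast C],
      show C ((Nat.choose i b : ℕ) : ℤ) = ((Nat.choose i b : ℕ) : PowerSeries ℤ)
        from by rw [← map_natCast C]]
    ring
  rw [hterm, coeff_C_mul]
  by_cases hok : (4*(i-b) + (j-i)) ≤ M ∧ 8 ∣ (M - (4*(i-b) + (j-i)))
  · -- divisible binomial case
    have hmod : (4*(i-b) + (j-i)) % 8 = 7 := by omega
    exact Dvd.dvd.mul_right (hd i b (by omega) (by omega) hmod) _
  · have hz : coeff M ((-1:PowerSeries ℤ)^(j-i) *
        (X^(4*(i-b) + (j-i)) * (useries^b * vseries^(i-b) * wseries^(j-i)))) = 0 := by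
      rcases Nat.even_or_odd (j-i) with hp | hp
      · rw [hp.neg_one_pow, one_mul]
        exact coeff_Xpow_mul_sup8
          (sup8_mul (sup8_mul (sup8_pow sup8_u b) (sup8_pow sup8_v (i-b))) (sup8_pow sup8_w (j-i))) hok
      · rw [hp.neg_one_pow, neg_one_mul, map_neg]
        rw [coeff_Xpow_mul_sup8
          (sup8_mul (sup8_mul (sup8_pow sup8_u b) (sup8_pow sup8_v (i-b))) (sup8_pow sup8_w (j-i))) hok,
          neg_zero]
    rw [hz, mul_zero]
    exact dvd_zero d

lemma th_pow_term (N k : ℕ) : (2*bser)^k * (1:PowerSeries ℤ)^(N-k) * ((Nat.choose N k : ℕ) : PowerSeries ℤ)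
    = C ((2^k * Nat.choose N k : ℕ) : ℤ) * bser^k := by
  rw [one_pow, mul_one, mul_pow]
  rw [show ((2^k * Nat.choose N k : ℕ) : ℤ) = (2:ℤ)^k * ((Nat.choose N k : ℕ) : ℤ) from by push_cast; ring]
  rw [map_mul, show C ((2:ℤ)^k) = (2:PowerSeries ℤ)^k from by rw [map_pow, map_ofNat],
    show C ((Nat.choose N k : ℕ) : ℤ) = ((Nat.choose N k : ℕ) : PowerSeries ℤ)
      from by rw [← map_natCast C]]
  ring

set_option maxHeartbeats 1000000 in
lemma theta115 (M : ℕ) (hM : M % 8 = 7) : (256:ℤ) ∣ coeff M (Th^115) := by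
  rw [theta_eq, add_comm, add_pow, map_sum]
  apply Finset.dvd_sum
  intro k hk
  rw [Finset.mem_range] at hk
  rw [th_pow_term, coeff_C_mul]
  rcases Nat.lt_or_ge k 8 with hk8 | hk8
  · interval_cases k
    · have h0 : (coeff M) (bser ^ 0) = 0 := by
        rw [pow_zero, coeff_one, if_neg (by omega)]
      rw [h0, mul_zero]
      exact dvd_zero _
    · obtain ⟨e, he⟩ := beta_pow_coeff M hM 1 128 (by intro i b h1 h2 h3; exfalso; omega)
      rw [he, show ((2^1 * Nat.choose 115 1 : ℕ) : ℤ) = 230 from by norm_num [Nat.choose],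
        show (230:ℤ) * (128 * e) = 256 * (115 * e) from by ring]
      exact Dvd.intro _ rfl
    · obtain ⟨e, he⟩ := beta_pow_coeff M hM 2 64 (by intro i b h1 h2 h3; exfalso; omega)
      rw [he, show ((2^2 * Nat.choose 115 2 : ℕ) : ℤ) = 26220 from by norm_num [Nat.choose],
        show (26220:ℤ) * (64 * e) = 256 * (6555 * e) from by ring]
      exact Dvd.intro _ rfl
    · obtain ⟨e, he⟩ := beta_pow_coeff M hM 3 32 (by intro i b h1 h2 h3; exfalso; omega)
      rw [he, show ((2^3 * Nat.choose 115 3 : ℕ) : ℤ) = 1975240 from by norm_num [Nat.choose],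
        show (1975240:ℤ) * (32 * e) = 256 * (246905 * e) from by ring]
      exact Dvd.intro _ rfl
    · obtain ⟨e, he⟩ := beta_pow_coeff M hM 4 4 (by
        intro i b h1 h2 h3
        have hib : i = 1 ∧ b = 0 := by omega
        obtain ⟨rfl, rfl⟩ := hib
        norm_num [Nat.choose])
      rw [he, show ((2^4 * Nat.choose 115 4 : ℕ) : ℤ) = 110613440 from by norm_num [Nat.choose],
        show (110613440:ℤ) * (4 * e) = 256 * (1728335 * e) from by ring]
      exact Dvd.intro _ rfl
    · obtain ⟨e, he⟩ := beta_pow_coeff M hM 5 2 (by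
        intro i b h1 h2 h3
        have hib : i = 2 ∧ b = 1 := by omega
        obtain ⟨rfl, rfl⟩ := hib
        norm_num [Nat.choose])
      rw [he, show ((2^5 * Nat.choose 115 5 : ℕ) : ℤ) = 4911236736 from by norm_num [Nat.choose],
        show (4911236736:ℤ) * (2 * e) = 256 * (38369037 * e) from by ring]
      exact Dvd.intro _ rfl
    · rw [show ((2^6 * Nat.choose 115 6 : ℕ) : ℤ) = 256 * 703432345 from by norm_num [Nat.choose]]
      exact (Dvd.intro _ rfl).mul_right _
    · rw [show ((2^7 * Nat.choose 115 7 : ℕ) : ℤ) = 256 * 21906893030 from by norm_num [Nat.choose]]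
      exact (Dvd.intro _ rfl).mul_right _
  · have hdvd : (256:ℕ) ∣ 2^k * Nat.choose 115 k := by
      have h256 : (256:ℕ) = 2^8 := by norm_num
      rw [h256]
      exact Dvd.dvd.mul_right (pow_dvd_pow 2 hk8) _
    have hZ : (256:ℤ) ∣ ((2^k * Nat.choose 115 k : ℕ) : ℤ) := by
      exact_mod_cast Int.natCast_dvd_natCast.mpr hdvd
    exact hZ.mul_right _

lemma choose128_dvd : ∀ j, 1 ≤ j → j ≤ 7 → (256:ℕ) ∣ 2^j * Nat.choose 128 j := by
  intro j h1 h7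
  have hid : Nat.choose 128 j * j = 128 * Nat.choose 127 (j-1) := by
    have h := Nat.add_one_mul_choose_eq 127 (j-1)
    norm_num at h
    rw [show j - 1 + 1 = j from by omega] at h
    omega
  set c' : ℕ := Nat.choose 127 (j-1) with hc'
  set c : ℕ := Nat.choose 128 j with hc
  interval_cases j
  · exact ⟨c', by omega⟩
  · exact ⟨c', by omega⟩
  · have h128 : (128:ℕ) ∣ c := (by norm_num : Nat.Coprime 128 3).dvd_of_dvd_mul_right ⟨c', by omega⟩
    obtain ⟨e, he⟩ := h128
    exact ⟨4*e, by omega⟩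
  · exact ⟨2*c', by omega⟩
  · have h128 : (128:ℕ) ∣ c := (by norm_num : Nat.Coprime 128 5).dvd_of_dvd_mul_right ⟨c', by omega⟩
    obtain ⟨e, he⟩ := h128
    exact ⟨16*e, by omega⟩
  · have h64 : (64:ℕ) ∣ c := (by norm_num : Nat.Coprime 64 3).dvd_of_dvd_mul_right ⟨c', by omega⟩
    obtain ⟨e, he⟩ := h64
    exact ⟨16*e, by omega⟩
  · have h128 : (128:ℕ) ∣ c := (by norm_num : Nat.Coprime 128 7).dvd_of_dvd_mul_right ⟨c', by omega⟩
    obtain ⟨e, he⟩ := h128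
    exact ⟨64*e, by omega⟩

lemma theta128 : ((256:ℕ) : PowerSeries ℤ) ∣ Th^128 - 1 := by
  rw [theta_eq, add_comm, add_pow]
  rw [Finset.sum_range_succ']
  have h0 : (2*bser)^0 * (1:PowerSeries ℤ)^(128-0) * ((Nat.choose 128 0 : ℕ) : PowerSeries ℤ) = 1 := by
    norm_num
  rw [h0, add_sub_cancel_right]
  apply Finset.dvd_sum
  intro k hk
  rw [Finset.mem_range] at hk
  rw [th_pow_term]
  have hdvd : (256:ℕ) ∣ 2^(k+1) * Nat.choose 128 (k+1) := by
    rcases Nat.lt_or_ge (k+1) 8 with hk8 | hk8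
    · exact choose128_dvd (k+1) (by omega) (by omega)
    · have h256 : (256:ℕ) = 2^8 := by norm_num
      rw [h256]
      exact Dvd.dvd.mul_right (pow_dvd_pow 2 hk8) _
  obtain ⟨c, hc⟩ := hdvd
  rw [hc]
  have : C ((256 * c : ℕ) : ℤ) = ((256:ℕ) : PowerSeries ℤ) * ((c:ℕ) : PowerSeries ℤ) := by
    rw [show ((256 * c : ℕ) : ℤ) = ((256:ℕ):ℤ) * ((c:ℕ):ℤ) from by push_cast; ring,
      map_mul, map_natCast, map_natCast]
  rw [this]
  exact (dvd_mul_right _ _).mul_right _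


lemma final_dvd (M : ℕ) (hM : M % 8 = 7) :
    (256:ℤ) ∣ coeff M ((∏ k ∈ Finset.Icc 1 M, (1 - X^(2*k)))^13 *
      invOfUnit ((∏ k ∈ Finset.Icc 1 M, (1 - X^k))^26) 1) := by
  set PM : PowerSeries ℤ := ∏ k ∈ Finset.Icc 1 M, (1 - X^k) with hPM
  set QM : PowerSeries ℤ := ∏ k ∈ Finset.Icc 1 M, (1 - X^(2*k)) with hQM
  set V : PowerSeries ℤ := invOfUnit (PM^26) 1 with hV
  have hconst : constantCoeff (PM^26) = 1 := by
    rw [map_pow, hPM, map_prod]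
    have hone : ∀ k ∈ Finset.Icc 1 M, constantCoeff (R := ℤ) (1 - X^k) = 1 := by
      intro k hk
      rw [Finset.mem_Icc] at hk
      rw [map_sub, map_one, map_pow, constantCoeff_X, zero_pow (by omega), sub_zero]
    rw [Finset.prod_congr rfl hone, Finset.prod_const_one, one_pow]
  have hunit : PM^26 * V = 1 := by
    apply PowerSeries.mul_invOfUnit
    rw [hconst]
    rfl
  have h13 : (X:PowerSeries ℤ)^(M+1) ∣ (Th*QM)^13 - (PM^2)^13 := md_pow (master M) 13
  have hFV : (X:PowerSeries ℤ)^(M+1) ∣ Th^13 * (QM^13 * V) - 1 := by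
    have h2 : (X:PowerSeries ℤ)^(M+1) ∣ ((Th*QM)^13 - (PM^2)^13) * V := h13.mul_right V
    have e : ((Th*QM)^13 - (PM^2)^13) * V = Th^13*(QM^13*V) - PM^26 * V := by
      rw [mul_pow, ← pow_mul]
      norm_num
      ring
    rw [e, hunit] at h2
    exact h2
  have h256 : (C 256) ∣ Th^128 - 1 := by
    have h := theta128
    rwa [show ((256:ℕ) : PowerSeries ℤ) = C 256 from by
      rw [← map_natCast C]; norm_num] at h
  have hdecomp : QM^13 * V - Th^115
      = (QM^13*V) * (1 - Th^128) + Th^115 * (Th^13 * (QM^13*V) - 1) := by ring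
  have hc1 : (256:ℤ) ∣ coeff M ((QM^13*V) * (1 - Th^128)) := by
    obtain ⟨g, hg⟩ := h256
    have e : (QM^13*V) * (1 - Th^128) = C 256 * (-((QM^13*V) * g)) := by
      rw [show (1:PowerSeries ℤ) - Th^128 = -(Th^128 - 1) from by ring, hg]
      ring
    rw [e, coeff_C_mul]
    exact Dvd.intro _ rfl
  have hc2 : coeff M (Th^115 * (Th^13*(QM^13*V) - 1)) = 0 := by
    obtain ⟨g, hg⟩ := hFV.mul_left (Th^115)
    rw [hg, PowerSeries.coeff_X_pow_mul', if_neg (by omega)]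
  have h115 := theta115 M hM
  have hsum : coeff M (QM^13 * V) = coeff M (Th^115)
      + coeff M ((QM^13*V) * (1 - Th^128))
      + coeff M (Th^115 * (Th^13 * (QM^13*V) - 1)) := by
    have h := congrArg (coeff M) hdecomp
    rw [map_sub, map_add] at h
    omega
  rw [hsum, hc2, add_zero]
  exact dvd_add h115 hc1

theorem pbar13_8n7_mod256 (n : ℕ) :
    pbar 13 (8 * n + 7) ≡ 0 [ZMOD 256] := by
  have hM : (8*n+7) % 8 = 7 := by omega
  have h := final_dvd (8*n+7) hM
  have he : pbar 13 (8*n+7) = coeff (8*n+7)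
      ((∏ k ∈ Finset.Icc 1 (8*n+7), (1 - X^(2*k)))^13 *
        invOfUnit ((∏ k ∈ Finset.Icc 1 (8*n+7), (1 - X^k))^26) 1) := by
    rw [pbar, Finset.prod_pow, Finset.prod_pow]
  rw [he]
  exact Int.modEq_zero_iff_dvd.mpr h
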